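/- arXiv:2012.02456 — 9 statements merged into one kernel-verified Lean document; each statement's English description precedes it below -/
import Mathlib

section
/- Let R : ℝ^d → ℝ be twice continuously differentiable with L₂-Lipschitz Hessian, where L₂ > 0, and let λ > 0. Suppose w and v are two distinct points with ∇R(w) = 0, ∇R(v) = 0, and ⟨u, ∇²R(w) u⟩ ≥ λ‖u‖² and ⟨u, ∇²R(v) u⟩ ≥ λ‖u‖² for every u ∈ ℝ^d. Then ‖w − v‖ ≥ 4λ/L₂. -/
open scoped RealInnerProductSpace
open Set

/-!
Restrict to the segment `t ↦ w + t • u` with `u = v - w`. The function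
`φ t = ⟪u, g (w + t • u)⟫` vanishes at `t = 0` and `t = 1`, and its derivative
`ψ t = ⟪u, H (w + t • u) u⟫` is `L₂ ‖u‖³`-Lipschitz with `ψ 0, ψ 1 ≥ λ ‖u‖²`. A Lipschitz slope
cannot drop fast, so `φ` rises by at least `ψ 0 / 2 - L₂ ‖u‖³ / 8` on `[0, 1/2]` and by at least
`ψ 1 / 2 - L₂ ‖u‖³ / 8` on `[1/2, 1]`. Hence `0 = φ 1 - φ 0 ≥ λ ‖u‖² - L₂ ‖u‖³ / 4`.
-/

theorem sub_le_sub_of_hasDerivAt_le {f f' p p' : ℝ → ℝ} {a b : ℝ} (hab : a ≤ b)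
    (hf : ∀ t ∈ Icc a b, HasDerivAt f (f' t) t) (hp : ∀ t ∈ Icc a b, HasDerivAt p (p' t) t)
    (hle : ∀ t ∈ Ioo a b, p' t ≤ f' t) : p b - p a ≤ f b - f a := by
  have hmono : MonotoneOn (f - p) (Icc a b) := by
    refine monotoneOn_of_hasDerivWithinAt_nonneg (convex_Icc a b) (f' := f' - p')
      (fun t ht => ((hf t ht).sub (hp t ht)).continuousAt.continuousWithinAt) ?_ ?_
    · rw [interior_Icc]
      exact fun t ht =>
        ((hf t (Ioo_subset_Icc_self ht)).sub (hp t (Ioo_subset_Icc_self ht))).hasDerivWithinAt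
    · rw [interior_Icc]
      exact fun t ht => sub_nonneg.mpr (hle t ht)
  have := hmono (left_mem_Icc.mpr hab) (right_mem_Icc.mpr hab) hab
  simp only [Pi.sub_apply] at this
  linarith

theorem add_le_of_hasDerivAt_of_lipschitz {φ ψ : ℝ → ℝ} {C : ℝ}
    (hφ : ∀ t, HasDerivAt φ (ψ t) t) (hψ : ∀ s t, |ψ s - ψ t| ≤ C * |s - t|) :
    ψ 0 + ψ 1 ≤ 2 * (φ 1 - φ 0) + C / 2 := by
  have hleft : ψ 0 / 2 - C / 8 ≤ φ (1 / 2) - φ 0 := by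
    have hp : ∀ t, HasDerivAt (fun t => ψ 0 * t - C / 2 * t ^ 2) (ψ 0 - C * t) t :=
      fun t => (((hasDerivAt_id' t).const_mul (ψ 0)).sub
        ((hasDerivAt_pow 2 t).const_mul (C / 2))).congr_deriv (by ring)
    have := sub_le_sub_of_hasDerivAt_le (a := 0) (b := 1 / 2) (by norm_num) (fun t _ => hφ t)
      (fun t _ => hp t) fun t ht => by
        have := (le_abs_self _).trans (hψ 0 t)
        rw [abs_of_neg (by linarith [ht.1])] at this
        linarith
    norm_num at this
    linarith
  have hright : ψ 1 / 2 - C / 8 ≤ φ 1 - φ (1 / 2) := by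
    have hp : ∀ t, HasDerivAt (fun t => ψ 1 * t + C / 2 * (1 - t) ^ 2) (ψ 1 - C * (1 - t)) t :=
      fun t => (((hasDerivAt_id' t).const_mul (ψ 1)).add
        ((((hasDerivAt_id' t).const_sub 1).pow 2).const_mul (C / 2))).congr_deriv (by ring)
    have := sub_le_sub_of_hasDerivAt_le (a := 1 / 2) (b := 1) (by norm_num) (fun t _ => hφ t)
      (fun t _ => hp t) fun t ht => by
        have := (le_abs_self _).trans (hψ 1 t)
        rw [abs_of_pos (by linarith [ht.2])] at this
        linarith
    norm_num at this
    linarith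
  linarith

section InnerProductSpace

variable {E : Type*} [NormedAddCommGroup E] [InnerProductSpace ℝ E] {g : E → E} {H : E → E →L[ℝ] E}

theorem hasDerivAt_inner_comp_add_smul (hH : ∀ x, HasFDerivAt g (H x) x) (w u : E) (t : ℝ) :
    HasDerivAt (fun t : ℝ => ⟪u, g (w + t • u)⟫) ⟪u, H (w + t • u) u⟫ t := by
  have hline : HasDerivAt (fun t : ℝ => w + t • u) u t := by
    simpa using ((hasDerivAt_id t).smul_const u).const_add w
  exact (innerSL ℝ u).hasFDerivAt.comp_hasDerivAt t ((hH _).comp_hasDerivAt t hline)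

theorem abs_inner_apply_add_smul_sub_le {L : ℝ} (hlip : ∀ x y, ‖H x - H y‖ ≤ L * ‖x - y‖)
    (w u : E) (s t : ℝ) :
    |⟪u, H (w + s • u) u⟫ - ⟪u, H (w + t • u) u⟫| ≤ L * ‖u‖ ^ 3 * |s - t| := by
  have hdist : ‖(w + s • u) - (w + t • u)‖ = |s - t| * ‖u‖ := by
    rw [add_sub_add_left_eq_sub, ← sub_smul, norm_smul, Real.norm_eq_abs]
  calc |⟪u, H (w + s • u) u⟫ - ⟪u, H (w + t • u) u⟫|
      = |⟪u, (H (w + s • u) - H (w + t • u)) u⟫| := by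
        rw [sub_apply, inner_sub_right]
    _ ≤ ‖u‖ * (‖H (w + s • u) - H (w + t • u)‖ * ‖u‖) :=
        (abs_real_inner_le_norm _ _).trans
          (mul_le_mul_of_nonneg_left (ContinuousLinearMap.le_opNorm _ _) (norm_nonneg _))
    _ ≤ ‖u‖ * (L * (|s - t| * ‖u‖) * ‖u‖) := by
        gcongr
        exact hdist ▸ hlip _ _
    _ = L * ‖u‖ ^ 3 * |s - t| := by ring

theorem four_mul_le_mul_norm_sub_of_coercive_zeros {L lam : ℝ} (hH : ∀ x, HasFDerivAt g (H x) x)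
    (hlip : ∀ x y, ‖H x - H y‖ ≤ L * ‖x - y‖) {w v : E} (hwv : w ≠ v)
    (hgw : g w = 0) (hgv : g v = 0)
    (hw : ∀ u, lam * ‖u‖ ^ 2 ≤ ⟪u, H w u⟫) (hv : ∀ u, lam * ‖u‖ ^ 2 ≤ ⟪u, H v u⟫) :
    4 * lam ≤ L * ‖w - v‖ := by
  set u := v - w
  have hu : 0 < ‖u‖ := norm_pos_iff.mpr (sub_ne_zero.mpr hwv.symm)
  have hsum := add_le_of_hasDerivAt_of_lipschitz (hasDerivAt_inner_comp_add_smul hH w u)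
    (abs_inner_apply_add_smul_sub_le hlip w u)
  have h0 : w + (0 : ℝ) • u = w := by simp
  have h1 : w + (1 : ℝ) • u = v := by simp [u]
  simp only [h0, h1, hgw, hgv, inner_zero_right, sub_zero, mul_zero, zero_add] at hsum
  have hsq : 4 * lam * ‖u‖ ^ 2 ≤ L * ‖u‖ * ‖u‖ ^ 2 := by linarith [hw u, hv u]
  rw [norm_sub_rev]
  exact le_of_mul_le_mul_right hsq (by positivity)

end InnerProductSpace

theorem dist_of_nondegenerate_local_minima_general
    {d : ℕ}
    (g : EuclideanSpace ℝ (Fin d) → EuclideanSpace ℝ (Fin d))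
    (H : EuclideanSpace ℝ (Fin d) → (EuclideanSpace ℝ (Fin d) →L[ℝ] EuclideanSpace ℝ (Fin d)))
    (hH : ∀ x, HasFDerivAt g (H x) x)
    (L₂ : ℝ) (hL₂ : 0 < L₂)
    (hlip : ∀ x y, ‖H x - H y‖ ≤ L₂ * ‖x - y‖)
    (lam : ℝ)
    (w v : EuclideanSpace ℝ (Fin d)) (hwv : w ≠ v)
    (hgw : g w = 0) (hgv : g v = 0)
    (hw : ∀ u, lam * ‖u‖ ^ 2 ≤ ⟪u, H w u⟫)
    (hv : ∀ u, lam * ‖u‖ ^ 2 ≤ ⟪u, H v u⟫) :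
    4 * lam / L₂ ≤ ‖w - v‖ := by
  rw [div_le_iff₀' hL₂]
  exact four_mul_le_mul_norm_sub_of_coercive_zeros hH hlip hwv hgw hgv hw hv

/-- Two distinct nondegenerate local minima of a function with `L₂`-Lipschitz Hessian
are at distance at least `4 λ / L₂` from each other. -/
theorem dist_of_nondegenerate_local_minima
    {d : ℕ} (R : EuclideanSpace ℝ (Fin d) → ℝ)
    (g : EuclideanSpace ℝ (Fin d) → EuclideanSpace ℝ (Fin d))
    (H : EuclideanSpace ℝ (Fin d) → (EuclideanSpace ℝ (Fin d) →L[ℝ] EuclideanSpace ℝ (Fin d)))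
    (hg : ∀ x, HasGradientAt R (g x) x)
    (hH : ∀ x, HasFDerivAt g (H x) x)
    (L₂ : ℝ) (hL₂ : 0 < L₂)
    (hlip : ∀ x y, ‖H x - H y‖ ≤ L₂ * ‖x - y‖)
    (lam : ℝ) (hlam : 0 < lam)
    (w v : EuclideanSpace ℝ (Fin d)) (hwv : w ≠ v)
    (hgw : g w = 0) (hgv : g v = 0)
    (hw : ∀ u, lam * ‖u‖ ^ 2 ≤ ⟪u, H w u⟫)
    (hv : ∀ u, lam * ‖u‖ ^ 2 ≤ ⟪u, H v u⟫) :
    4 * lam / L₂ ≤ ‖w - v‖ :=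
  dist_of_nondegenerate_local_minima_general g H hH L₂ hL₂ hlip lam w v hwv hgw hgv hw hv
end

section
/- Let W ⊆ ℝ^d be a convex set, let f : ℝ^d → ℝ be differentiable and convex on W, let w₀ ∈ W, and let λ, r > 0. Assume f is locally (λ/2)-strongly convex at w₀ on the ball of radius r: for every w ∈ W with ‖w − w₀‖ ≤ r, f(w) ≥ f(w₀) + ⟨∇f(w₀), w − w₀⟩ + (λ/4)‖w − w₀‖². If ‖∇f(w₀)‖ < λr/4, then every global minimizer w* of f over W satisfies ‖w* − w₀‖ < r. -/
open scoped RealInnerProductSpace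

/-- If a convex differentiable function is locally strongly convex at `w₀` on a ball of
radius `r` and the gradient at `w₀` is small, then every global minimizer over `W`
lies in the open ball of radius `r` around `w₀`. -/
theorem global_minimizer_in_ball
    {d : ℕ} (W : Set (EuclideanSpace ℝ (Fin d))) (hW : Convex ℝ W)
    (f : EuclideanSpace ℝ (Fin d) → ℝ)
    (g : EuclideanSpace ℝ (Fin d) → EuclideanSpace ℝ (Fin d))
    (hg : ∀ x, HasGradientAt f (g x) x)
    (hconv : ConvexOn ℝ W f)
    (w₀ : EuclideanSpace ℝ (Fin d)) (hw₀ : w₀ ∈ W)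
    (lam r : ℝ) (hlam : 0 < lam) (hr : 0 < r)
    (hsc : ∀ w ∈ W, ‖w - w₀‖ ≤ r →
      f w₀ + ⟪g w₀, w - w₀⟫ + lam / 4 * ‖w - w₀‖ ^ 2 ≤ f w)
    (hgrad : ‖g w₀‖ < lam * r / 4)
    (wstar : EuclideanSpace ℝ (Fin d)) (hwstar : wstar ∈ W)
    (hmin : ∀ w ∈ W, f wstar ≤ f w) :
    ‖wstar - w₀‖ < r := by
  by_contra h
  push_neg at h
  set s := ‖wstar - w₀‖ with hs
  have hs0 : 0 < s := lt_of_lt_of_le hr h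
  set t := r / s with ht
  have ht0 : 0 < t := div_pos hr hs0
  have ht1 : t ≤ 1 := (div_le_one hs0).mpr h
  set w := w₀ + t • (wstar - w₀) with hwdef
  have hwW : w ∈ W := by
    have := hW hw₀ hwstar (by linarith : (0:ℝ) ≤ 1 - t) (le_of_lt ht0) (by ring)
    have e : (1 - t) • w₀ + t • wstar = w := by
      rw [hwdef]; module
    rwa [e] at this
  have hdiff : w - w₀ = t • (wstar - w₀) := by rw [hwdef]; abel
  have hnorm : ‖w - w₀‖ = r := by
    rw [hdiff, norm_smul, Real.norm_eq_abs, abs_of_pos ht0, ← hs, ht]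
    field_simp
  -- upper bound from convexity
  have hupper : f w ≤ f w₀ := by
    have e : w = (1 - t) • w₀ + t • wstar := by rw [hwdef]; module
    have := hconv.2 hw₀ hwstar (by linarith : (0:ℝ) ≤ 1 - t) (le_of_lt ht0) (by ring)
    rw [← e] at this
    have := this.trans (by nlinarith [hmin w₀ hw₀] : (1 - t) * f w₀ + t * f wstar ≤ f w₀)
    exact this
  -- lower bound from strong convexity
  have hlow := hsc w hwW (le_of_eq hnorm)
  have hinner : -(‖g w₀‖ * r) ≤ ⟪g w₀, w - w₀⟫ := by
    have := abs_real_inner_le_norm (g w₀) (w - w₀)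
    rw [hnorm] at this
    have := neg_abs_le ⟪g w₀, w - w₀⟫
    nlinarith [abs_real_inner_le_norm (g w₀) (w - w₀), hnorm,
      neg_abs_le ⟪g w₀, w - w₀⟫]
  rw [hnorm] at hlow
  nlinarith
end

section
/- Let Z be a type, n ≥ 1, z₁, …, zₙ, z₁' ∈ Z, and let f : ℝ^d × Z → ℝ be such that f(·, z) is differentiable with ‖∇_w f(w, z)‖ ≤ L₀ for all w ∈ ℝ^d and z ∈ Z. Define the empirical risks F(w) = (1/n)∑_{i=1}^n f(w, z_i) and F'(w) = (1/n)( f(w, z₁') + ∑_{i=2}^n f(w, z_i) ), which differ only in the first sample. Let C ⊆ ℝ^d be a convex set on which F is (λ/2)-strongly convex, i.e. F(y) ≥ F(x) + ⟨∇F(x), y − x⟩ + (λ/4)‖y − x‖² for all x, y ∈ C, with λ > 0. If w₁ ∈ C satisfies ∇F(w₁) = 0 and w₂ ∈ C satisfies ∇F'(w₂) = 0, then ‖w₁ − w₂‖ ≤ 8L₀/(nλ). -/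
/-!
Both risks are averages of `n` terms sharing all but one summand, so their gradients differ
everywhere by at most `2 L₀ / n`; in particular `‖∇F w₂‖ ≤ 2 L₀ / n`. Adding the strong-convexity
inequality at `(w₁, w₂)` and at `(w₂, w₁)`, and using `∇F w₁ = 0`, gives
`λ/2 ‖w₁ - w₂‖² ≤ ⟪∇F w₂, w₂ - w₁⟫ ≤ ‖∇F w₂‖ ‖w₁ - w₂‖`, hence `‖w₁ - w₂‖ ≤ 4 L₀ / (n λ)`.
-/

open scoped RealInnerProductSpace

theorem HasGradientAt.const_mul_sum {E ι : Type*} [NormedAddCommGroup E] [InnerProductSpace ℝ E]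
    [CompleteSpace E] {s : Finset ι} {f : ι → E → ℝ} {g : ι → E} {w : E} (c : ℝ)
    (hf : ∀ i ∈ s, HasGradientAt (f i) (g i) w) :
    HasGradientAt (fun w' => c * ∑ i ∈ s, f i w') (c • ∑ i ∈ s, g i) w := by
  rw [hasGradientAt_iff_hasFDerivAt]
  refine ((HasFDerivAt.fun_sum fun i hi =>
    hasGradientAt_iff_hasFDerivAt.1 (hf i hi)).const_mul c).congr_fderiv ?_
  rw [map_smul, map_sum]

theorem Fintype.sum_comp_sub_sum_comp_update {ι α M : Type*} [Fintype ι] [DecidableEq ι]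
    [AddCommGroup M] (v : α → M) (z : ι → α) (i : ι) (a : α) :
    ∑ j, v (z j) - ∑ j, v (Function.update z i a j) = v (z i) - v a := by
  change ∑ j, (v ∘ z) j - ∑ j, (v ∘ Function.update z i a) j = _
  rw [Function.comp_update, Finset.sum_update_of_mem (Finset.mem_univ i),
    Finset.sum_eq_add_sum_sdiff_singleton_of_mem (Finset.mem_univ i)]
  simp only [Function.comp_apply]
  abel

theorem norm_smul_sum_sub_smul_sum_update_le {ι α E : Type*} [Fintype ι] [DecidableEq ι]
    [SeminormedAddCommGroup E] [NormedSpace ℝ E] {v : α → E} {L c : ℝ} (hv : ∀ x, ‖v x‖ ≤ L)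
    (hc : 0 ≤ c) (z : ι → α) (i : ι) (a : α) :
    ‖c • ∑ j, v (z j) - c • ∑ j, v (Function.update z i a j)‖ ≤ c * (2 * L) := by
  rw [← smul_sub, Fintype.sum_comp_sub_sum_comp_update, norm_smul, Real.norm_of_nonneg hc]
  gcongr
  linarith [norm_sub_le (v (z i)) (v a), hv (z i), hv a]

theorem mul_norm_sub_le_of_strongly_convex_of_gradient_eq_zero {E : Type*}
    [NormedAddCommGroup E] [InnerProductSpace ℝ E] {F : E → ℝ} {G : E → E} {C : Set E}
    {lam : ℝ} (hsc : ∀ x ∈ C, ∀ y ∈ C, F x + ⟪G x, y - x⟫ + lam / 4 * ‖y - x‖ ^ 2 ≤ F y)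
    {x y : E} (hx : x ∈ C) (hy : y ∈ C) (hGx : G x = 0) :
    lam * ‖x - y‖ ≤ 2 * ‖G y‖ := by
  have hmono : lam / 2 * ‖x - y‖ ^ 2 ≤ -⟪G y, x - y⟫ := by
    have hxy := hsc x hx y hy
    have hyx := hsc y hy x hx
    rw [hGx, inner_zero_left, norm_sub_rev] at hxy
    linarith
  have hcs : -⟪G y, x - y⟫ ≤ ‖G y‖ * ‖x - y‖ :=
    (neg_le_abs _).trans (abs_real_inner_le_norm _ _)
  rcases (norm_nonneg (x - y)).eq_or_lt with h0 | hpos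
  · rw [← h0, mul_zero]
    positivity
  · nlinarith

theorem critical_points_of_neighboring_samples_close_general
    {d : ℕ} {Z : Type*} {n : ℕ} (hn : 0 < n)
    (z : Fin n → Z) (z₁' : Z)
    (f : EuclideanSpace ℝ (Fin d) → Z → ℝ)
    (g : EuclideanSpace ℝ (Fin d) → Z → EuclideanSpace ℝ (Fin d))
    (L₀ : ℝ)
    (hg : ∀ (w : EuclideanSpace ℝ (Fin d)) (zz : Z),
      HasGradientAt (fun w' => f w' zz) (g w zz) w)
    (hL₀ : ∀ (w : EuclideanSpace ℝ (Fin d)) (zz : Z), ‖g w zz‖ ≤ L₀)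
    (F F' : EuclideanSpace ℝ (Fin d) → ℝ)
    (hF : F = fun w => (n : ℝ)⁻¹ * ∑ i : Fin n, f w (z i))
    (hF' : F' = fun w => (n : ℝ)⁻¹ * ∑ i : Fin n, f w (Function.update z ⟨0, hn⟩ z₁' i))
    (GF GF' : EuclideanSpace ℝ (Fin d) → EuclideanSpace ℝ (Fin d))
    (hGF : ∀ w, HasGradientAt F (GF w) w)
    (hGF' : ∀ w, HasGradientAt F' (GF' w) w)
    (C : Set (EuclideanSpace ℝ (Fin d)))
    (lam : ℝ) (hlam : 0 < lam)
    (hsc : ∀ x ∈ C, ∀ y ∈ C, F x + ⟪GF x, y - x⟫ + lam / 4 * ‖y - x‖ ^ 2 ≤ F y)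
    (w₁ : EuclideanSpace ℝ (Fin d)) (hw₁ : w₁ ∈ C) (hgw₁ : GF w₁ = 0)
    (w₂ : EuclideanSpace ℝ (Fin d)) (hw₂ : w₂ ∈ C) (hgw₂ : GF' w₂ = 0) :
    ‖w₁ - w₂‖ ≤ 8 * L₀ / (n * lam) := by
  have hn' : (0 : ℝ) < n := by exact_mod_cast hn
  have hL₀_nonneg : 0 ≤ L₀ := (norm_nonneg _).trans (hL₀ w₁ z₁')
  have hGF_eq : GF w₂ = (n : ℝ)⁻¹ • ∑ i, g w₂ (z i) := by
    subst hF
    exact (hGF w₂).unique (.const_mul_sum _ fun i _ => hg w₂ (z i))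
  have hGF'_eq : GF' w₂ = (n : ℝ)⁻¹ • ∑ i, g w₂ (Function.update z ⟨0, hn⟩ z₁' i) := by
    subst hF'
    exact (hGF' w₂).unique (.const_mul_sum _ fun i _ => hg w₂ _)
  have hgrad : ‖GF w₂‖ ≤ (n : ℝ)⁻¹ * (2 * L₀) := by
    have hdiff :=
      norm_smul_sum_sub_smul_sum_update_le (hL₀ w₂) (inv_nonneg.2 hn'.le) z ⟨0, hn⟩ z₁'
    rwa [← hGF_eq, ← hGF'_eq, hgw₂, sub_zero] at hdiff
  have hdist := mul_norm_sub_le_of_strongly_convex_of_gradient_eq_zero hsc hw₁ hw₂ hgw₁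
  rw [le_div_iff₀ (by positivity)]
  have hgrad' : n * ‖GF w₂‖ ≤ 2 * L₀ := by
    rwa [← le_inv_mul_iff₀ hn']
  calc ‖w₁ - w₂‖ * (n * lam) = n * (lam * ‖w₁ - w₂‖) := by ring
    _ ≤ n * (2 * ‖GF w₂‖) := by gcongr
    _ ≤ 8 * L₀ := by linarith

/-- Two critical points, on a set where the empirical risk is strongly convex, of
empirical risks built from samples differing in exactly one data point are at
distance at most `8 L₀ / (n λ)`. -/
theorem critical_points_of_neighboring_samples_close
    {d : ℕ} {Z : Type*} {n : ℕ} (hn : 0 < n)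
    (z : Fin n → Z) (z₁' : Z)
    (f : EuclideanSpace ℝ (Fin d) → Z → ℝ)
    (g : EuclideanSpace ℝ (Fin d) → Z → EuclideanSpace ℝ (Fin d))
    (L₀ : ℝ)
    (hg : ∀ (w : EuclideanSpace ℝ (Fin d)) (zz : Z),
      HasGradientAt (fun w' => f w' zz) (g w zz) w)
    (hL₀ : ∀ (w : EuclideanSpace ℝ (Fin d)) (zz : Z), ‖g w zz‖ ≤ L₀)
    (F F' : EuclideanSpace ℝ (Fin d) → ℝ)
    (hF : F = fun w => (n : ℝ)⁻¹ * ∑ i : Fin n, f w (z i))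
    (hF' : F' = fun w => (n : ℝ)⁻¹ * ∑ i : Fin n, f w (Function.update z ⟨0, hn⟩ z₁' i))
    (GF GF' : EuclideanSpace ℝ (Fin d) → EuclideanSpace ℝ (Fin d))
    (hGF : ∀ w, HasGradientAt F (GF w) w)
    (hGF' : ∀ w, HasGradientAt F' (GF' w) w)
    (C : Set (EuclideanSpace ℝ (Fin d))) (hC : Convex ℝ C)
    (lam : ℝ) (hlam : 0 < lam)
    (hsc : ∀ x ∈ C, ∀ y ∈ C, F x + ⟪GF x, y - x⟫ + lam / 4 * ‖y - x‖ ^ 2 ≤ F y)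
    (w₁ : EuclideanSpace ℝ (Fin d)) (hw₁ : w₁ ∈ C) (hgw₁ : GF w₁ = 0)
    (w₂ : EuclideanSpace ℝ (Fin d)) (hw₂ : w₂ ∈ C) (hgw₂ : GF' w₂ = 0) :
    ‖w₁ - w₂‖ ≤ 8 * L₀ / (n * lam) :=
  critical_points_of_neighboring_samples_close_general hn z z₁' f g L₀ hg hL₀ F F' hF hF' GF GF' hGF
    hGF' C lam hlam hsc w₁ hw₁ hgw₁ w₂ hw₂ hgw₂
end

section
/- Let W ⊆ ℝ^d be a convex set, let f : ℝ^d → ℝ be convex on W, let λ, r > 0, and let w* ∈ W be a global minimizer of f over W such that f grows quadratically near w*: for every w ∈ W with ‖w − w*‖ ≤ r, f(w) − f(w*) ≥ (λ/8)‖w − w*‖². Then for every w ∈ W with f(w) − f(w*) < λr²/8, one has ‖w − w*‖ ≤ √( (8/λ)(f(w) − f(w*)) ), i.e. the distance bound holds even for points outside the ball of radius r. -/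
/-!
Along the segment from `w*` to `w`, convexity makes the excess `f - f w*` grow at least
linearly: at the fraction `t` of the way it is at most `t (f w - f w*)`. If `w` lay outside the
ball of radius `r`, the point where the segment crosses the sphere of radius `r` would have
excess at least `λ r² / 8`, forcing `f w - f w*` to exceed `λ r² / 8`. So `w` lies in the ball,
where the quadratic growth hypothesis applies directly.
-/

theorem ConvexOn.sub_le_mul_sub {𝕜 E : Type*} [Field 𝕜] [LinearOrder 𝕜] [IsStrictOrderedRing 𝕜]
    [AddCommGroup E] [Module 𝕜 E] {s : Set E} {f : E → 𝕜} (hf : ConvexOn 𝕜 s f)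
    {x y : E} (hx : x ∈ s) (hy : y ∈ s) {t : 𝕜} (ht₀ : 0 ≤ t) (ht₁ : t ≤ 1) :
    f (x + t • (y - x)) - f x ≤ t * (f y - f x) := by
  have hcomb : x + t • (y - x) = (1 - t) • x + t • y := by module
  have := hf.2 hx hy (sub_nonneg.2 ht₁) ht₀ (sub_add_cancel 1 t)
  rw [hcomb]
  simp only [smul_eq_mul] at this
  linarith

theorem ConvexOn.norm_sub_le_of_sub_lt {E : Type*} [NormedAddCommGroup E] [NormedSpace ℝ E]
    {s : Set E} {f : E → ℝ} (hf : ConvexOn ℝ s f) {x y : E} (hx : x ∈ s) (hy : y ∈ s)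
    {r c : ℝ} (hr : 0 < r) (hc : 0 < c)
    (hsphere : ∀ z ∈ s, ‖z - x‖ = r → c ≤ f z - f x) (hy_lt : f y - f x < c) :
    ‖y - x‖ ≤ r := by
  by_contra! hfar
  have hpos : 0 < ‖y - x‖ := hr.trans hfar
  set t := r / ‖y - x‖
  have ht₀ : 0 < t := div_pos hr hpos
  have ht₁ : t < 1 := (div_lt_one hpos).2 hfar
  have hnorm : ‖x + t • (y - x) - x‖ = r := by
    rw [add_sub_cancel_left, norm_smul, Real.norm_of_nonneg ht₀.le, div_mul_cancel₀ _ hpos.ne']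
  have hcross : c ≤ f (x + t • (y - x)) - f x :=
    hsphere _ (hf.1.add_smul_sub_mem hx hy ⟨ht₀.le, ht₁.le⟩) hnorm
  have hseg := hf.sub_le_mul_sub hx hy ht₀.le ht₁.le
  have hexcess : 0 < f y - f x := pos_of_mul_pos_right (hc.trans_le (hcross.trans hseg)) ht₀.le
  nlinarith [mul_pos (sub_pos.2 ht₁) hexcess]

theorem quadratic_growth_extends_outside_ball_general
    {d : ℕ} (W : Set (EuclideanSpace ℝ (Fin d)))
    (f : EuclideanSpace ℝ (Fin d) → ℝ) (hconv : ConvexOn ℝ W f)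
    (lam r : ℝ) (hlam : 0 < lam) (hr : 0 < r)
    (wstar : EuclideanSpace ℝ (Fin d)) (hws : wstar ∈ W)
    (hqg : ∀ w ∈ W, ‖w - wstar‖ ≤ r → lam / 8 * ‖w - wstar‖ ^ 2 ≤ f w - f wstar) :
    ∀ w ∈ W, f w - f wstar < lam * r ^ 2 / 8 →
      ‖w - wstar‖ ≤ Real.sqrt (8 / lam * (f w - f wstar)) := by
  intro w hw hsmall
  have hsphere : ∀ z ∈ W, ‖z - wstar‖ = r → lam * r ^ 2 / 8 ≤ f z - f wstar := by
    intro z hz hzr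
    have := hqg z hz hzr.le
    rw [hzr] at this
    linarith
  have hball : ‖w - wstar‖ ≤ r :=
    hconv.norm_sub_le_of_sub_lt hws hw hr (by positivity) hsphere hsmall
  refine Real.le_sqrt_of_sq_le ?_
  rw [div_mul_eq_mul_div, le_div_iff₀ hlam]
  linarith [hqg w hw hball]

/-- For a convex function with local quadratic growth of modulus `λ/4` around a global
minimizer `w*` on a ball of radius `r`, any point of `W` whose excess value is below
`λ r² / 8` satisfies the corresponding distance bound, even outside the ball. -/
theorem quadratic_growth_extends_outside_ball
    {d : ℕ} (W : Set (EuclideanSpace ℝ (Fin d))) (hW : Convex ℝ W)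
    (f : EuclideanSpace ℝ (Fin d) → ℝ) (hconv : ConvexOn ℝ W f)
    (lam r : ℝ) (hlam : 0 < lam) (hr : 0 < r)
    (wstar : EuclideanSpace ℝ (Fin d)) (hws : wstar ∈ W)
    (hmin : ∀ w ∈ W, f wstar ≤ f w)
    (hqg : ∀ w ∈ W, ‖w - wstar‖ ≤ r → lam / 8 * ‖w - wstar‖ ^ 2 ≤ f w - f wstar) :
    ∀ w ∈ W, f w - f wstar < lam * r ^ 2 / 8 →
      ‖w - wstar‖ ≤ Real.sqrt (8 / lam * (f w - f wstar)) :=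
  quadratic_growth_extends_outside_ball_general W f hconv lam r hlam hr wstar hws hqg
end

section
/- Let W ⊆ ℝ^d be a nonempty convex set with diameter at most D (i.e. ‖w − v‖ ≤ D for all w, v ∈ W), let f : ℝ^d → ℝ be convex and differentiable with L₁-Lipschitz gradient (L₁ > 0), and let w* be a global minimizer of f over W. Let (w_k)_{k≥0} be projected gradient descent iterates with step size 1/L₁: w₀ ∈ W and for each k ≥ 1, w_k ∈ W satisfies ⟨w_{k−1} − (1/L₁)∇f(w_{k−1}) − w_k, u − w_k⟩ ≤ 0 for all u ∈ W. Then for every t ≥ 1, f(w_t) − f(w*) ≤ D²L₁/(2t). -/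
/-!
Write `x⁺` for a projected gradient step from `x`. The descent lemma at `x`, the gradient
inequality of convexity at a comparator `u ∈ W` and the variational inequality of the projection
combine into the three-point estimate `f x⁺ - f u ≤ L/2 (‖x - u‖² - ‖x⁺ - u‖²)`. For `u = w*` it
telescopes to `∑_{k<t} (f w_{k+1} - f w*) ≤ L/2 ‖w₀ - w*‖² ≤ L D²/2`; for `u = w_k` it shows that
`f w_k` is nonincreasing, so `t (f w_t - f w*)` is bounded by that sum.
-/

open scoped RealInnerProductSpace

section

open AffineMap

variable {E : Type*} [NormedAddCommGroup E] [InnerProductSpace ℝ E] [CompleteSpace E]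

theorem HasGradientAt.hasDerivAt_comp_lineMap {f : E → ℝ} {g x y : E} {t : ℝ}
    (hf : HasGradientAt f g (lineMap x y t)) :
    HasDerivAt (fun s : ℝ => f (lineMap x y s)) ⟪g, y - x⟫ t :=
  hf.hasFDerivAt.comp_hasDerivAt t hasDerivAt_lineMap

theorem ConvexOn.add_inner_gradient_le {s : Set E} {f : E → ℝ} {g x y : E}
    (hf : ConvexOn ℝ s f) (hx : x ∈ s) (hy : y ∈ s) (hg : HasGradientAt f g x) :
    f x + ⟪g, y - x⟫ ≤ f y := by
  have hφ : ConvexOn ℝ (lineMap x y ⁻¹' s) (fun t : ℝ => f (lineMap x y t)) :=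
    hf.comp_affineMap (lineMap (k := ℝ) x y)
  have hderiv : HasDerivAt (fun t : ℝ => f (lineMap x y t)) ⟪g, y - x⟫ 0 :=
    ((lineMap_apply_zero (k := ℝ) x y).symm ▸ hg).hasDerivAt_comp_lineMap
  have hslope :=
    hφ.le_slope_of_hasDerivAt (by simpa using hx) (by simpa using hy) zero_lt_one hderiv
  simp only [slope_def_field, lineMap_apply_zero, lineMap_apply_one, sub_zero, div_one] at hslope
  linarith

theorem le_add_inner_gradient_add_sq {f : E → ℝ} {g : E → E} {L : ℝ}
    (hg : ∀ x, HasGradientAt f (g x) x) (hlip : ∀ x y, ‖g x - g y‖ ≤ L * ‖x - y‖) (x y : E) :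
    f y ≤ f x + ⟪g x, y - x⟫ + L / 2 * ‖y - x‖ ^ 2 := by
  set h : ℝ → ℝ := fun t => f (lineMap x y t) - t * ⟪g x, y - x⟫ - L / 2 * t ^ 2 * ‖y - x‖ ^ 2
  have hderiv (t : ℝ) : HasDerivAt h
      (⟪g (lineMap x y t), y - x⟫ - ⟪g x, y - x⟫ - L * t * ‖y - x‖ ^ 2) t := by
    have hline := (hg (lineMap x y t)).hasDerivAt_comp_lineMap
    have hlin := (hasDerivAt_id t).mul_const ⟪g x, y - x⟫
    have hquad := ((hasDerivAt_pow 2 t).const_mul (L / 2)).mul_const (‖y - x‖ ^ 2)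
    refine ((hline.sub hlin).sub hquad).congr_deriv ?_
    push_cast
    ring
  have hderiv_nonpos {t : ℝ} (ht : 0 ≤ t) :
      ⟪g (lineMap x y t), y - x⟫ - ⟪g x, y - x⟫ ≤ L * t * ‖y - x‖ ^ 2 :=
    calc ⟪g (lineMap x y t), y - x⟫ - ⟪g x, y - x⟫
        = ⟪g (lineMap x y t) - g x, y - x⟫ := (inner_sub_left _ _ _).symm
      _ ≤ ‖g (lineMap x y t) - g x‖ * ‖y - x‖ := real_inner_le_norm _ _
      _ ≤ L * ‖lineMap x y t - x‖ * ‖y - x‖ := by gcongr; exact hlip _ _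
      _ = L * t * ‖y - x‖ ^ 2 := by
        rw [← vsub_eq_sub, lineMap_vsub_left, norm_smul, Real.norm_of_nonneg ht, vsub_eq_sub]
        ring
  have hanti : AntitoneOn h (Set.Icc 0 1) := by
    refine antitoneOn_of_hasDerivWithinAt_nonpos (convex_Icc 0 1)
      (fun t _ => (hderiv t).continuousAt.continuousWithinAt)
      (fun t _ => (hderiv t).hasDerivWithinAt) fun t ht => ?_
    rw [interior_Icc] at ht
    linarith [hderiv_nonpos ht.1.le]
  have hendpoints := hanti (by simp) (by simp) zero_le_one
  simp only [h, lineMap_apply_zero, lineMap_apply_one] at hendpoints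
  linarith

theorem sub_le_of_projected_gradient_step {f : E → ℝ} {g : E → E} {L : ℝ} (hL : 0 < L)
    (hf : ConvexOn ℝ Set.univ f) (hg : ∀ x, HasGradientAt f (g x) x)
    (hlip : ∀ x y, ‖g x - g y‖ ≤ L * ‖x - y‖) {x x' u : E}
    (hproj : ⟪x - (1 / L) • g x - x', u - x'⟫ ≤ 0) :
    f x' - f u ≤ L / 2 * (‖x - u‖ ^ 2 - ‖x' - u‖ ^ 2) := by
  have hdescent := le_add_inner_gradient_add_sq hg hlip x x'
  rw [norm_sub_rev] at hdescent
  have hsupport := hf.add_inner_gradient_le (Set.mem_univ x) (Set.mem_univ u) (hg x)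
  have hgrad : ⟪g x, x' - x⟫ - ⟪g x, u - x⟫ = ⟪g x, x' - u⟫ := by
    rw [← inner_sub_right, sub_sub_sub_cancel_right]
  have hvariational : ⟪g x, x' - u⟫ ≤ ⟪x - x', x' - u⟫ * L := by
    rwa [← neg_sub x' u, inner_neg_right, neg_nonpos, sub_right_comm, inner_sub_left,
      real_inner_smul_left, sub_nonneg, one_div, ← div_eq_inv_mul, div_le_iff₀ hL] at hproj
  have hpyth : ‖x - u‖ ^ 2 = ‖x - x'‖ ^ 2 + 2 * ⟪x - x', x' - u⟫ + ‖x' - u‖ ^ 2 := by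
    rw [← norm_add_sq_real, sub_add_sub_cancel]
  rw [hpyth]
  linarith

end

theorem Antitone.natCast_mul_le_of_le_sub {e a : ℕ → ℝ} (he : Antitone e)
    (hstep : ∀ k, e (k + 1) ≤ a k - a (k + 1)) (t : ℕ) : t * e t ≤ a 0 - a t := by
  induction t with
  | zero => simp
  | succ n ih =>
    have hmul := mul_le_mul_of_nonneg_left (he n.le_succ) n.cast_nonneg
    push_cast
    linarith [hstep n]

theorem projected_gradient_descent_rate_general
    {d : ℕ} (W : Set (EuclideanSpace ℝ (Fin d)))
    (D : ℝ) (hdiam : ∀ w ∈ W, ∀ v ∈ W, ‖w - v‖ ≤ D)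
    (f : EuclideanSpace ℝ (Fin d) → ℝ)
    (g : EuclideanSpace ℝ (Fin d) → EuclideanSpace ℝ (Fin d))
    (hg : ∀ x, HasGradientAt f (g x) x)
    (hconv : ConvexOn ℝ Set.univ f)
    (L₁ : ℝ) (hL₁ : 0 < L₁)
    (hlip : ∀ x y, ‖g x - g y‖ ≤ L₁ * ‖x - y‖)
    (wstar : EuclideanSpace ℝ (Fin d)) (hws : wstar ∈ W)
    (w : ℕ → EuclideanSpace ℝ (Fin d)) (hw0 : w 0 ∈ W)
    (hmem : ∀ k, w (k + 1) ∈ W)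
    (hproj : ∀ k, ∀ u ∈ W,
      ⟪w k - (1 / L₁) • g (w k) - w (k + 1), u - w (k + 1)⟫ ≤ 0) :
    ∀ t : ℕ, 1 ≤ t → f (w t) - f wstar ≤ D ^ 2 * L₁ / (2 * t) := by
  intro t ht
  have hstep k {u} (hu : u ∈ W) :
      f (w (k + 1)) - f u ≤ L₁ / 2 * (‖w k - u‖ ^ 2 - ‖w (k + 1) - u‖ ^ 2) :=
    sub_le_of_projected_gradient_step hL₁ hconv hg hlip (hproj k u hu)
  have hmono : Antitone fun k => f (w k) - f wstar := by
    refine antitone_nat_of_succ_le fun k => ?_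
    have hdecrease : f (w (k + 1)) - f (w k) ≤ -(L₁ / 2 * ‖w (k + 1) - w k‖ ^ 2) := by
      simpa using hstep k (u := w k) (Nat.casesOn k hw0 hmem)
    have hsq : 0 ≤ L₁ / 2 * ‖w (k + 1) - w k‖ ^ 2 := by positivity
    linarith
  have hsum := hmono.natCast_mul_le_of_le_sub (a := fun k => L₁ / 2 * ‖w k - wstar‖ ^ 2)
    (fun k => (hstep k hws).trans_eq (mul_sub _ _ _)) t
  have hinit : ‖w 0 - wstar‖ ^ 2 ≤ D ^ 2 :=
    pow_le_pow_left₀ (norm_nonneg _) (hdiam _ hw0 _ hws) 2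
  rw [le_div_iff₀ (by positivity)]
  nlinarith [mul_le_mul_of_nonneg_left hinit hL₁.le, mul_nonneg hL₁.le (sq_nonneg ‖w t - wstar‖)]

/-- Convergence rate of projected gradient descent with step size `1/L₁` for a convex
function with `L₁`-Lipschitz gradient over a convex set of diameter at most `D`. -/
theorem projected_gradient_descent_rate
    {d : ℕ} (W : Set (EuclideanSpace ℝ (Fin d))) (hW : Convex ℝ W) (hWne : W.Nonempty)
    (D : ℝ) (hdiam : ∀ w ∈ W, ∀ v ∈ W, ‖w - v‖ ≤ D)
    (f : EuclideanSpace ℝ (Fin d) → ℝ)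
    (g : EuclideanSpace ℝ (Fin d) → EuclideanSpace ℝ (Fin d))
    (hg : ∀ x, HasGradientAt f (g x) x)
    (hconv : ConvexOn ℝ Set.univ f)
    (L₁ : ℝ) (hL₁ : 0 < L₁)
    (hlip : ∀ x y, ‖g x - g y‖ ≤ L₁ * ‖x - y‖)
    (wstar : EuclideanSpace ℝ (Fin d)) (hws : wstar ∈ W)
    (hmin : ∀ w ∈ W, f wstar ≤ f w)
    (w : ℕ → EuclideanSpace ℝ (Fin d)) (hw0 : w 0 ∈ W)
    (hmem : ∀ k, w (k + 1) ∈ W)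
    (hproj : ∀ k, ∀ u ∈ W,
      ⟪w k - (1 / L₁) • g (w k) - w (k + 1), u - w (k + 1)⟫ ≤ 0) :
    ∀ t : ℕ, 1 ≤ t → f (w t) - f wstar ≤ D ^ 2 * L₁ / (2 * t) :=
  projected_gradient_descent_rate_general W D hdiam f g hg hconv L₁ hL₁ hlip wstar hws w hw0 hmem
    hproj
end

section
/- Let (Ω, P) be a probability space, let θ : Ω → ℝ be a Rademacher random variable (P(θ = 1) = P(θ = −1) = 1/2), and let M : Ω → ℝ^{d×d} be a random symmetric matrix with operator norm ‖M(ω)‖ ≤ L almost surely (L > 0), independent of θ. Then for every c ∈ ℝ, the matrix exp(c²L²/2)·I_d − E[exp(c·θ·M)] is positive semidefinite, where exp(c·θ(ω)·M(ω)) denotes the matrix exponential and the expectation is taken entrywise; i.e. θM is a sub-Gaussian random matrix with matrix parameter L²·I_d. -/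
/-!
Since `θ = ±1` with probability `1/2` each, independently of `M`, the expectation
`E[exp(cθM)]` equals `E[(exp(cM) + exp(-cM)) / 2]`. In this average the odd terms of the two
exponential series cancel, so its norm is at most `cosh(|c| L) ≤ exp(c²L²/2)`, and an operator
of norm at most `a` is dominated by `a • 1` as a quadratic form.
-/

open MeasureTheory ProbabilityTheory
open scoped RealInnerProductSpace

section ExpBounds

variable {𝔸 : Type*} [NormedRing 𝔸] [NormedAlgebra ℝ 𝔸]

theorem norm_expSeries_term_le [NormOneClass 𝔸] (x : 𝔸) (n : ℕ) :
    ‖(n.factorial⁻¹ : ℝ) • x ^ n‖ ≤ (n.factorial⁻¹ : ℝ) • ‖x‖ ^ n := by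
  rw [norm_smul, Real.norm_of_nonneg (by positivity), smul_eq_mul]
  gcongr
  exact norm_pow_le x n

variable [CompleteSpace 𝔸]

theorem continuous_normedSpace_exp : Continuous (NormedSpace.exp : 𝔸 → 𝔸) :=
  continuous_iff_continuousAt.2 fun x => (NormedSpace.exp_analytic (𝕂 := ℝ) x).continuousAt

variable [NormOneClass 𝔸]

theorem norm_exp_le_exp_norm (x : 𝔸) : ‖NormedSpace.exp x‖ ≤ Real.exp ‖x‖ := by
  rw [Real.exp_eq_exp_ℝ]
  exact (NormedSpace.exp_series_hasSum_exp' (𝕂 := ℝ) x).norm_le_of_bounded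
    (NormedSpace.exp_series_hasSum_exp' (𝕂 := ℝ) (𝔸 := ℝ) ‖x‖) (norm_expSeries_term_le x)

theorem norm_exp_add_exp_neg_le (x : 𝔸) :
    ‖NormedSpace.exp x + NormedSpace.exp (-x)‖ ≤ 2 * Real.cosh ‖x‖ := by
  have hsum := (NormedSpace.exp_series_hasSum_exp' (𝕂 := ℝ) x).add
    (NormedSpace.exp_series_hasSum_exp' (𝕂 := ℝ) (-x))
  have hsumℝ := (NormedSpace.exp_series_hasSum_exp' (𝕂 := ℝ) (𝔸 := ℝ) ‖x‖).add
    (NormedSpace.exp_series_hasSum_exp' (𝕂 := ℝ) (𝔸 := ℝ) (-‖x‖))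
  rw [Real.cosh_eq, mul_div_cancel₀ _ two_ne_zero, Real.exp_eq_exp_ℝ]
  refine hsum.norm_le_of_bounded hsumℝ fun n => ?_
  rcases n.even_or_odd with hn | hn
  · rw [hn.neg_pow, hn.neg_pow]
    exact (norm_add_le _ _).trans
      (add_le_add (norm_expSeries_term_le x n) (norm_expSeries_term_le x n))
  · simp [hn.neg_pow]

theorem norm_two_inv_smul_exp_add_exp_neg_le (x : 𝔸) :
    ‖(2⁻¹ : ℝ) • (NormedSpace.exp x + NormedSpace.exp (-x))‖ ≤ Real.exp (‖x‖ ^ 2 / 2) :=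
  calc ‖(2⁻¹ : ℝ) • (NormedSpace.exp x + NormedSpace.exp (-x))‖
      = 2⁻¹ * ‖NormedSpace.exp x + NormedSpace.exp (-x)‖ := by
        rw [norm_smul, Real.norm_of_nonneg (by norm_num)]
    _ ≤ Real.cosh ‖x‖ := by linarith [norm_exp_add_exp_neg_le x]
    _ ≤ Real.exp (‖x‖ ^ 2 / 2) := Real.cosh_le_exp_half_sq _

theorem integrable_exp_of_norm_le {Ω : Type*} [MeasurableSpace Ω] {P : Measure Ω}
    [IsFiniteMeasure P] {f : Ω → 𝔸} {C : ℝ} (hf : AEStronglyMeasurable f P)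
    (hC : ∀ᵐ ω ∂P, ‖f ω‖ ≤ C) :
    Integrable (fun ω => NormedSpace.exp (f ω)) P := by
  refine .of_bound (continuous_normedSpace_exp.comp_aestronglyMeasurable hf) (Real.exp C) ?_
  filter_upwards [hC] with ω hω
  exact (norm_exp_le_exp_norm _).trans (Real.exp_le_exp.2 hω)

end ExpBounds

section Rademacher

variable {Ω : Type*} [MeasurableSpace Ω] {P : Measure Ω} [IsProbabilityMeasure P] {θ : Ω → ℝ}

theorem ae_eq_one_or_eq_neg_one (hθm : Measurable θ) (hθ1 : P {ω | θ ω = 1} = 1 / 2)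
    (hθ2 : P {ω | θ ω = -1} = 1 / 2) : ∀ᵐ ω ∂P, θ ω = 1 ∨ θ ω = -1 := by
  have hdisj : Disjoint {ω | θ ω = 1} {ω | θ ω = -1} :=
    Set.disjoint_left.2 fun ω (h1 : θ ω = 1) (h2 : θ ω = -1) => by norm_num [h1] at h2
  have hunion : P ({ω | θ ω = 1} ∪ {ω | θ ω = -1}) = 1 := by
    rw [measure_union hdisj (hθm (measurableSet_singleton _)), hθ1, hθ2, ENNReal.add_halves]
  exact (prob_compl_eq_zero_iff ((hθm (measurableSet_singleton _)).union
    (hθm (measurableSet_singleton _)))).2 hunion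

variable {𝓨 E : Type*} [MeasurableSpace 𝓨] [NormedAddCommGroup E] [NormedSpace ℝ E]
  {Y : Ω → 𝓨}

theorem ProbabilityTheory.IndepFun.integral_rademacher_comp (hind : IndepFun θ Y P)
    (hθm : Measurable θ) (hY : AEMeasurable Y P) (hθ1 : P {ω | θ ω = 1} = 1 / 2) (hθ2 : P {ω | θ ω = -1} = 1 / 2)
    {g : ℝ → 𝓨 → E} (hg : ∀ t, StronglyMeasurable (g t))
    (hg₁ : Integrable (fun ω => g 1 (Y ω)) P) (hg₂ : Integrable (fun ω => g (-1) (Y ω)) P) :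
    ∫ ω, g (θ ω) (Y ω) ∂P = ∫ ω, (2⁻¹ : ℝ) • (g 1 (Y ω) + g (-1) (Y ω)) ∂P := by
  set χ : ℝ → ℝ → ℝ := fun a => ({a} : Set ℝ).indicator 1
  have hχ a : Measurable (χ a) := measurable_const.indicator (measurableSet_singleton a)
  have hsplit : (fun ω => g (θ ω) (Y ω)) =ᵐ[P]
      fun ω => χ 1 (θ ω) • g 1 (Y ω) + χ (-1) (θ ω) • g (-1) (Y ω) := by
    filter_upwards [ae_eq_one_or_eq_neg_one hθm hθ1 hθ2] with ω h
    rcases h with h | h <;> norm_num [χ, h]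
  have hint a (h : Integrable (fun ω => g a (Y ω)) P) :
      Integrable (fun ω => χ a (θ ω) • g a (Y ω)) P :=
    h.bdd_smul 1 ((hχ a).comp hθm).aestronglyMeasurable
      (.of_forall fun ω => (norm_indicator_le_norm_self _ _).trans (by simp))
  have hfactor a (ha : P {ω | θ ω = a} = 1 / 2) :
      ∫ ω, χ a (θ ω) • g a (Y ω) ∂P = (2⁻¹ : ℝ) • ∫ ω, g a (Y ω) ∂P := by
    have hmean : ∫ ω, χ a (θ ω) ∂P = 2⁻¹ := by
      change ∫ ω, (θ ⁻¹' {a}).indicator 1 ω ∂P = _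
      rw [integral_indicator_one (hθm (measurableSet_singleton a)), measureReal_def]
      simp [Set.preimage, ha]
    rw [hind.integral_fun_comp_smul_comp hθm.aemeasurable hY (hχ a).aestronglyMeasurable
      (hg a).aestronglyMeasurable, hmean]
  rw [integral_congr_ae hsplit, integral_add (hint 1 hg₁) (hint (-1) hg₂), integral_smul,
    integral_add hg₁ hg₂, smul_add, hfactor 1 hθ1, hfactor (-1) hθ2]

end Rademacher

theorem inner_smul_one_sub_apply_self_nonneg {E : Type*} [NormedAddCommGroup E]
    [InnerProductSpace ℝ E] {T : E →L[ℝ] E} {a : ℝ} (hT : ‖T‖ ≤ a) (u : E) :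
    0 ≤ ⟪u, (a • (1 : E →L[ℝ] E) - T) u⟫ := by
  have hTu : ⟪u, T u⟫ ≤ a * ‖u‖ ^ 2 :=
    calc ⟪u, T u⟫ ≤ ‖u‖ * ‖T u‖ := real_inner_le_norm u (T u)
      _ ≤ ‖u‖ * (‖T‖ * ‖u‖) := by gcongr; exact T.le_opNorm u
      _ ≤ a * ‖u‖ ^ 2 := by nlinarith [norm_nonneg u]
  rw [sub_apply, inner_sub_right, smul_apply, one_apply_eq_self,
    real_inner_smul_right, real_inner_self_eq_norm_sq]
  linarith

theorem rademacher_times_bounded_matrix_subGaussian_general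
    {d : ℕ} {Ω : Type*} [MeasurableSpace Ω] (P : Measure Ω) [IsProbabilityMeasure P]
    [MeasurableSpace (EuclideanSpace ℝ (Fin d) →L[ℝ] EuclideanSpace ℝ (Fin d))]
    [BorelSpace (EuclideanSpace ℝ (Fin d) →L[ℝ] EuclideanSpace ℝ (Fin d))]
    (θ : Ω → ℝ) (hθm : Measurable θ)
    (hθ1 : P {ω | θ ω = 1} = 1 / 2) (hθ2 : P {ω | θ ω = -1} = 1 / 2)
    (M : Ω → EuclideanSpace ℝ (Fin d) →L[ℝ] EuclideanSpace ℝ (Fin d))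
    (hMm : Measurable M)
    (L : ℝ) (hMb : ∀ᵐ ω ∂P, ‖M ω‖ ≤ L)
    (hind : ProbabilityTheory.IndepFun θ M P) :
    ∀ (c : ℝ) (u : EuclideanSpace ℝ (Fin d)),
      0 ≤ ⟪u, (Real.exp (c ^ 2 * L ^ 2 / 2) •
            (1 : EuclideanSpace ℝ (Fin d) →L[ℝ] EuclideanSpace ℝ (Fin d)) -
          ∫ ω, NormedSpace.exp (c • θ ω • M ω) ∂P) u⟫ := by
  intro c u
  -- `‖1‖ = 1` for operators only on a nontrivial space
  rcases subsingleton_or_nontrivial (EuclideanSpace ℝ (Fin d)) with _ | _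
  · simp [Subsingleton.elim u 0]
  have hmeas (t : ℝ) : StronglyMeasurable
      fun A : EuclideanSpace ℝ (Fin d) →L[ℝ] EuclideanSpace ℝ (Fin d) =>
      NormedSpace.exp (c • t • A) :=
    (continuous_normedSpace_exp.comp (by fun_prop)).stronglyMeasurable
  have hint (t : ℝ) : Integrable (fun ω => NormedSpace.exp (c • t • M ω)) P :=
    integrable_exp_of_norm_le (C := |c| * |t| * L)
      ((hMm.aestronglyMeasurable.const_smul t).const_smul c) <| by
        filter_upwards [hMb] with ω hω
        rw [norm_smul, norm_smul, Real.norm_eq_abs, Real.norm_eq_abs, ← mul_assoc]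
        gcongr
  rw [hind.integral_rademacher_comp (g := fun t A => NormedSpace.exp (c • t • A)) hθm
    hMm.aemeasurable hθ1 hθ2 hmeas (hint 1) (hint (-1))]
  refine inner_smul_one_sub_apply_self_nonneg
    ((norm_integral_le_of_norm_le_const (C := Real.exp (c ^ 2 * L ^ 2 / 2)) ?_).trans
      (by simp)) u
  filter_upwards [hMb] with ω hω
  have hcM : ‖c • M ω‖ ^ 2 ≤ c ^ 2 * L ^ 2 := by
    rw [norm_smul, Real.norm_eq_abs, mul_pow, sq_abs]
    gcongr
  rw [one_smul, show c • (-1 : ℝ) • M ω = -(c • M ω) by module]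
  exact (norm_two_inv_smul_exp_add_exp_neg_le _).trans (Real.exp_le_exp.2 (by linarith))

/-- A Rademacher variable times an independent bounded symmetric random matrix
(formalized as a self-adjoint operator on `ℝ^d`) is a sub-Gaussian random matrix with
matrix parameter `L² I`: for every `c`, the operator
`exp(c² L² / 2) • I − E[exp(c θ M)]` is positive semidefinite. -/
theorem rademacher_times_bounded_matrix_subGaussian
    {d : ℕ} {Ω : Type*} [MeasurableSpace Ω] (P : Measure Ω) [IsProbabilityMeasure P]
    [MeasurableSpace (EuclideanSpace ℝ (Fin d) →L[ℝ] EuclideanSpace ℝ (Fin d))]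
    [BorelSpace (EuclideanSpace ℝ (Fin d) →L[ℝ] EuclideanSpace ℝ (Fin d))]
    (θ : Ω → ℝ) (hθm : Measurable θ)
    (hθ1 : P {ω | θ ω = 1} = 1 / 2) (hθ2 : P {ω | θ ω = -1} = 1 / 2)
    (M : Ω → EuclideanSpace ℝ (Fin d) →L[ℝ] EuclideanSpace ℝ (Fin d))
    (hMm : Measurable M)
    (hMsym : ∀ᵐ ω ∂P, IsSelfAdjoint (M ω))
    (L : ℝ) (hL : 0 < L) (hMb : ∀ᵐ ω ∂P, ‖M ω‖ ≤ L)
    (hind : ProbabilityTheory.IndepFun θ M P) :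
    ∀ (c : ℝ) (u : EuclideanSpace ℝ (Fin d)),
      0 ≤ ⟪u, (Real.exp (c ^ 2 * L ^ 2 / 2) •
            (1 : EuclideanSpace ℝ (Fin d) →L[ℝ] EuclideanSpace ℝ (Fin d)) -
          ∫ ω, NormedSpace.exp (c • θ ω • M ω) ∂P) u⟫ :=
  rademacher_times_bounded_matrix_subGaussian_general P θ hθm hθ1 hθ2 M hMm L hMb hind
end

section
/- Let f : ℝ^d → ℝ be differentiable with L₁-Lipschitz gradient (L₁ > 0), and let 0 < β. Suppose w ∈ ℝ^d satisfies ‖w‖ = 1 and ⟨∇f(w), w⟩ ≥ β, and set w⁺ = (1 − β/L₁)·w. Then f(w⁺) − f(w) ≤ −β²/(2L₁). -/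
open scoped RealInnerProductSpace

/-!
A Lipschitz gradient gives the quadratic upper bound
`f y ≤ f x + ⟪∇f x, y - x⟫ + L/2 ‖y - x‖²` (the descent lemma). For `y = w⁺` the step is
`-(β/L₁) w`, so the linear term is at most `-β²/L₁` and the quadratic term is `β²/(2L₁)`.
-/

theorem le_add_deriv_add_of_deriv_sub_le {ψ ψ' : ℝ → ℝ} {K : ℝ}
    (hψ : ∀ t, HasDerivAt ψ (ψ' t) t) (hψ' : ∀ t ∈ Set.Ioo (0 : ℝ) 1, ψ' t - ψ' 0 ≤ K * t) :
    ψ 1 ≤ ψ 0 + ψ' 0 + K / 2 := by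
  -- `ψ` minus its quadratic majorant `t ↦ ψ 0 + t ψ' 0 + K t² / 2` is antitone on `[0, 1]`.
  set φ : ℝ → ℝ := fun t => ψ t - t * ψ' 0 - K / 2 * t ^ 2
  have hφ : ∀ t, HasDerivAt φ (ψ' t - ψ' 0 - K * t) t := fun t => by
    refine (((hψ t).sub ((hasDerivAt_id t).mul_const (ψ' 0))).sub
      ((hasDerivAt_pow 2 t).const_mul (K / 2))).congr_deriv ?_
    ring
  have hanti : AntitoneOn φ (Set.Icc 0 1) :=
    antitoneOn_of_deriv_nonpos (convex_Icc 0 1)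
      (fun t _ => (hφ t).continuousAt.continuousWithinAt)
      (fun t _ => (hφ t).differentiableAt.differentiableWithinAt)
      (fun t ht => by
        rw [interior_Icc] at ht
        rw [(hφ t).deriv]
        linarith [hψ' t ht])
  have := hanti (Set.left_mem_Icc.2 zero_le_one) (Set.right_mem_Icc.2 zero_le_one) zero_le_one
  simp only [φ] at this
  linarith

theorem le_add_fderiv_add_of_lipschitz_fderiv {E : Type*} [NormedAddCommGroup E]
    [NormedSpace ℝ E] {f : E → ℝ} {f' : E → E →L[ℝ] ℝ} {L : ℝ}
    (hf : ∀ x, HasFDerivAt f (f' x) x) (hf' : ∀ x y, ‖f' x - f' y‖ ≤ L * ‖x - y‖)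
    (x y : E) : f y ≤ f x + f' x (y - x) + L / 2 * ‖y - x‖ ^ 2 := by
  set v := y - x
  have hline : ∀ t : ℝ, HasDerivAt (fun t : ℝ => x + t • v) v t := fun t => by
    simpa using ((hasDerivAt_id t).smul_const v).const_add x
  have key := le_add_deriv_add_of_deriv_sub_le (ψ := fun t => f (x + t • v))
    (ψ' := fun t => f' (x + t • v) v) (K := L * ‖v‖ ^ 2)
    (fun t => (hf _).comp_hasDerivAt t (hline t))
    (fun t ht => calc
      f' (x + t • v) v - f' (x + (0 : ℝ) • v) v = (f' (x + t • v) - f' x) v := by simp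
      _ ≤ ‖f' (x + t • v) - f' x‖ * ‖v‖ := (le_abs_self _).trans ((f' _ - f' x).le_opNorm v)
      _ ≤ L * ‖t • v‖ * ‖v‖ := by
            gcongr; simpa using hf' (x + t • v) x
      _ = L * ‖v‖ ^ 2 * t := by
            rw [norm_smul, Real.norm_of_nonneg ht.1.le]; ring)
  simp only [zero_smul, add_zero, one_smul, v, add_sub_cancel] at key
  linarith

theorem le_add_inner_gradient_add_of_lipschitz_gradient {E : Type*} [NormedAddCommGroup E]
    [InnerProductSpace ℝ E] [CompleteSpace E] {f : E → ℝ} {g : E → E} {L : ℝ}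
    (hg : ∀ x, HasGradientAt f (g x) x) (hlip : ∀ x y, ‖g x - g y‖ ≤ L * ‖x - y‖)
    (x y : E) : f y ≤ f x + ⟪g x, y - x⟫ + L / 2 * ‖y - x‖ ^ 2 :=
  le_add_fderiv_add_of_lipschitz_fderiv (fun x => (hg x).hasFDerivAt)
    (fun x y => by
      rw [← map_sub, LinearIsometryEquiv.norm_map]
      exact hlip x y) x y

/-- Descent guarantee of the boundary step `w⁺ = (1 − β/L₁) w` of projected gradient
descent on the unit ball, when the gradient has inner product at least `β` with the
outward normal at a point of the unit sphere. -/
theorem boundary_step_descent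
    {d : ℕ} (f : EuclideanSpace ℝ (Fin d) → ℝ)
    (g : EuclideanSpace ℝ (Fin d) → EuclideanSpace ℝ (Fin d))
    (hg : ∀ x, HasGradientAt f (g x) x)
    (L₁ : ℝ) (hL₁ : 0 < L₁)
    (hlip : ∀ x y, ‖g x - g y‖ ≤ L₁ * ‖x - y‖)
    (β : ℝ) (hβ : 0 < β)
    (w : EuclideanSpace ℝ (Fin d)) (hw : ‖w‖ = 1) (hgw : β ≤ ⟪g w, w⟫)
    (wplus : EuclideanSpace ℝ (Fin d)) (hwp : wplus = (1 - β / L₁) • w) :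
    f wplus - f w ≤ -(β ^ 2 / (2 * L₁)) := by
  have hstep : wplus - w = (-(β / L₁)) • w := by rw [hwp]; module
  have hstep_pos : 0 ≤ β / L₁ := (div_pos hβ hL₁).le
  have hdescent := le_add_inner_gradient_add_of_lipschitz_gradient hg hlip w wplus
  rw [hstep, real_inner_smul_right, norm_smul, hw, mul_one, Real.norm_eq_abs, sq_abs] at hdescent
  calc f wplus - f w ≤ -(β / L₁) * ⟪g w, w⟫ + L₁ / 2 * (-(β / L₁)) ^ 2 := by linarith
    _ ≤ -(β / L₁) * β + L₁ / 2 * (-(β / L₁)) ^ 2 := by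
        gcongr ?_ + _; exact mul_le_mul_of_nonpos_left hgw (neg_nonpos.2 hstep_pos)
    _ = -(β ^ 2 / (2 * L₁)) := by field_simp; ring
end

section
/- Let W ⊆ ℝ^d be a nonempty convex set with diameter at most D (D > 0), let n ≥ 1, let f₁, …, fₙ : ℝ^d → ℝ be convex differentiable functions with ‖∇f_i(w)‖ ≤ L₀ for all w ∈ W and all i, set F = (1/n)∑_{i=1}^n f_i, and let w* be a global minimizer of F over W. Fix L₁ > 0, t ≥ 0, w₀ ∈ W, and step sizes η_k = D/(L₁√(k+1)). For each index sequence σ ∈ {1,…,n}^t define SGD iterates w₀^σ = w₀ and, for 0 ≤ k < t, let w_{k+1}^σ ∈ W satisfy ⟨w_k^σ − η_k ∇f_{σ_k}(w_k^σ) − w_{k+1}^σ, u − w_{k+1}^σ⟩ ≤ 0 for all u ∈ W, where w_{k+1}^σ depends only on σ₀, …, σ_k. Then the average of the running average over all n^t index sequences satisfies (1/n^t) ∑_σ (1/(t+1)) ∑_{k=0}^{t} F(w_k^σ) − F(w*) ≤ D(L₁² + 2L₀²) / (2L₁√(t+1)). -/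
/-!
Along one index sequence, convexity of `f_{σ_k}` and the variational characterisation of the
projection give
`f_{σ_k}(w_k) - f_{σ_k}(w*) ≤ (‖w_k - w*‖² - ‖w_{k+1} - w*‖²) / (2η_k) + η_k L₀² / 2`,
and the same with `0` in place of `‖w_{k+1} - w*‖²` for every `f_i` at the final iterate.
As the `η_k` decrease and `‖w_k - w*‖ ≤ D`, Abel summation bounds the sum of the right-hand
sides by `D² / (2η_t) + (L₀² / 2) ∑ η_k`. Averaging over the index sequences turns
`f_{σ_k}(w_k)` into `F(w_k)`, because `w_k` does not depend on `σ_k`. For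
`η_k = D / (L₁ √(k+1))`, the bound `∑_{k ≤ t} 1/√(k+1) ≤ 2√(t+1)` gives the rate.
-/

open scoped RealInnerProductSpace
open Finset

theorem ConvexOn.add_inner_sub_le_of_hasGradientAt {E : Type*} [NormedAddCommGroup E]
    [InnerProductSpace ℝ E] [CompleteSpace E] {f : E → ℝ} {g x : E}
    (hf : ConvexOn ℝ Set.univ f) (hg : HasGradientAt f g x) (y : E) :
    f x + ⟪g, y - x⟫ ≤ f y := by
  let line : ℝ →ᵃ[ℝ] E := AffineMap.lineMap x y
  have hconv : ConvexOn ℝ Set.univ (f ∘ line) := by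
    simpa using hf.comp_affineMap line
  have hderiv : HasDerivAt (f ∘ line) ⟪g, y - x⟫ 0 := by
    have hg' : HasFDerivAt f (InnerProductSpace.toDual ℝ E g) (line 0) := by
      simpa [line] using hg.hasFDerivAt
    exact hg'.comp_hasDerivAt 0 AffineMap.hasDerivAt_lineMap
  have := hconv.le_slope_of_hasDerivAt (Set.mem_univ 0) (Set.mem_univ 1) one_pos hderiv
  simp only [slope_def_field, Function.comp_apply, AffineMap.lineMap_apply_one,
    AffineMap.lineMap_apply_zero, sub_zero, div_one, line] at this
  linarith

theorem norm_sub_sq_le_of_inner_sub_le_zero {E : Type*} [NormedAddCommGroup E]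
    [InnerProductSpace ℝ E] {y p u : E} (h : ⟪y - p, u - p⟫ ≤ 0) :
    ‖p - u‖ ^ 2 ≤ ‖y - u‖ ^ 2 := by
  have hsplit : y - u = (y - p) + (p - u) := by abel
  have hneg : ⟪y - p, p - u⟫ = -⟪y - p, u - p⟫ := by
    rw [← inner_neg_right, neg_sub]
  rw [hsplit, norm_add_sq_real, hneg]
  nlinarith [sq_nonneg ‖y - p‖]

theorem ConvexOn.sub_le_of_gradient_step {E : Type*} [NormedAddCommGroup E]
    [InnerProductSpace ℝ E] [CompleteSpace E] {f : E → ℝ} {g x : E} {η L r : ℝ} (u : E)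
    (hf : ConvexOn ℝ Set.univ f) (hg : HasGradientAt f g x) (hη : 0 < η) (hL : ‖g‖ ≤ L)
    (hr : r ≤ ‖x - η • g - u‖ ^ 2) :
    f x - f u ≤ (‖x - u‖ ^ 2 - r) / (2 * η) + η * L ^ 2 / 2 := by
  have hsub := hf.add_inner_sub_le_of_hasGradientAt hg u
  have hexpand : ‖x - η • g - u‖ ^ 2 = ‖x - u‖ ^ 2 - 2 * η * ⟪g, x - u⟫ + η ^ 2 * ‖g‖ ^ 2 := by
    rw [sub_right_comm, norm_sub_sq_real, real_inner_smul_right, real_inner_comm, norm_smul,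
      Real.norm_of_nonneg hη.le]
    ring
  have hneg : ⟪g, u - x⟫ = -⟪g, x - u⟫ := by rw [← inner_neg_right, neg_sub]
  have hgL : ‖g‖ ^ 2 ≤ L ^ 2 := pow_le_pow_left₀ (norm_nonneg g) hL 2
  rw [div_add_div _ _ (by positivity) two_ne_zero, le_div_iff₀ (by positivity)]
  nlinarith [mul_le_mul_of_nonneg_left hgL (sq_nonneg η)]

theorem sum_range_sub_mul_add_le {a b : ℕ → ℝ} {A : ℝ} {m : ℕ} (ha : ∀ k ≤ m, a k ≤ A)
    (hb₀ : 0 ≤ b 0) (hb : Monotone b) :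
    ∑ k ∈ range m, (a k - a (k + 1)) * b k + a m * b m ≤ A * b m := by
  induction m with
  | zero => simpa using mul_le_mul_of_nonneg_right (ha 0 le_rfl) hb₀
  | succ m ih =>
    have hbm : b m ≤ b (m + 1) := hb m.le_succ
    rw [sum_range_succ]
    nlinarith [ih fun k hk => ha k (hk.trans m.le_succ), ha (m + 1) le_rfl]

theorem sum_range_inv_sqrt_succ_le (m : ℕ) :
    ∑ k ∈ range m, (√(k + 1))⁻¹ ≤ 2 * √m := by
  induction m with
  | zero => simp
  | succ m ih =>
    rw [sum_range_succ, Nat.cast_succ]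
    have hpos : 0 < √((m : ℝ) + 1) := Real.sqrt_pos.2 (by positivity)
    have hsq : √((m : ℝ) + 1) ^ 2 = m + 1 := Real.sq_sqrt (by positivity)
    have hsq' : √(m : ℝ) ^ 2 = m := Real.sq_sqrt (by positivity)
    have hstep : (√((m : ℝ) + 1))⁻¹ ≤ 2 * (√((m : ℝ) + 1) - √m) := by
      rw [inv_le_iff_one_le_mul₀' hpos]
      nlinarith [sq_nonneg (√((m : ℝ) + 1) - √m), Real.sqrt_nonneg (m : ℝ)]
    linarith

theorem sum_inv_card_mul_sum_eq_sum_apply {κ ι β : Type*} [Fintype κ] [DecidableEq κ]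
    [Fintype ι] [Nonempty ι] (j : κ) (φ : ι → β → ℝ) (y : (κ → ι) → β)
    (hy : ∀ σ c, y (Function.update σ j c) = y σ) :
    ∑ σ, (Fintype.card ι : ℝ)⁻¹ * ∑ i, φ i (y σ) = ∑ σ, φ (σ j) (y σ) := by
  have swap : Function.Involutive fun p : (κ → ι) × ι => (Function.update p.1 j p.2, p.1 j) := by
    rintro ⟨σ, c⟩
    simp
  have hcount : ∑ σ, ∑ i, φ i (y σ) = Fintype.card ι • ∑ σ, φ (σ j) (y σ) := by
    calc ∑ σ, ∑ i, φ i (y σ)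
        = ∑ p : (κ → ι) × ι, φ (Function.update p.1 j p.2 j) (y (Function.update p.1 j p.2)) := by
          simp [Fintype.sum_prod_type, hy]
      _ = ∑ p : (κ → ι) × ι, φ (p.1 j) (y p.1) :=
          Equiv.sum_comp swap.toPerm (fun p => φ (p.1 j) (y p.1))
      _ = Fintype.card ι • ∑ σ, φ (σ j) (y σ) := by
          rw [Fintype.sum_prod_type, sum_comm]; simp
  rw [← mul_sum, hcount, nsmul_eq_mul, ← mul_assoc, inv_mul_cancel₀ (by positivity), one_mul]

section ProjectedSGD

variable {E ι : Type*} [NormedAddCommGroup E] [InnerProductSpace ℝ E] [CompleteSpace E]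
  [Fintype ι] [Nonempty ι] {f : ι → E → ℝ} {g : ι → E → E} {W : Set E} {D L : ℝ} {η : ℕ → ℝ}
  {t : ℕ} {u : E}

theorem projectedSGD_regret_le (i : Fin t → ι) (x : ℕ → E) (hu : u ∈ W)
    (hconv : ∀ i, ConvexOn ℝ Set.univ (f i)) (hgrad : ∀ i y, HasGradientAt (f i) (g i y) y)
    (hL : ∀ i, ∀ y ∈ W, ‖g i y‖ ≤ L) (hdiam : ∀ y ∈ W, ∀ z ∈ W, ‖y - z‖ ≤ D)
    (hη : ∀ k, 0 < η k) (hη_anti : Antitone η) (hx : ∀ k ≤ t, x k ∈ W)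
    (hproj : ∀ k : Fin t, ⟪x k - η k • g (i k) (x k) - x (k + 1), u - x (k + 1)⟫ ≤ 0) :
    ∑ k, (f (i k) (x k) - f (i k) u) + (Fintype.card ι : ℝ)⁻¹ * ∑ j, (f j (x t) - f j u) ≤
      D ^ 2 / (2 * η t) + L ^ 2 / 2 * ∑ k ∈ range (t + 1), η k := by
  set a : ℕ → ℝ := fun k => ‖x k - u‖ ^ 2
  set b : ℕ → ℝ := fun k => (2 * η k)⁻¹
  have hstep : ∀ k : Fin t, f (i k) (x k) - f (i k) u ≤ (a k - a (k + 1)) * b k + η k * L ^ 2 / 2 :=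
    fun k => (hconv (i k)).sub_le_of_gradient_step u (hgrad _ _) (hη k) (hL _ _ (hx k k.2.le))
      (norm_sub_sq_le_of_inner_sub_le_zero (hproj k))
  have hlast : ∀ j, f j (x t) - f j u ≤ a t * b t + η t * L ^ 2 / 2 := fun j => by
    have := (hconv j).sub_le_of_gradient_step u (hgrad _ _) (hη t) (hL _ _ (hx t le_rfl))
      (sq_nonneg _)
    rwa [sub_zero] at this
  have hmean : (Fintype.card ι : ℝ)⁻¹ * ∑ j, (f j (x t) - f j u) ≤ a t * b t + η t * L ^ 2 / 2 := by
    rw [inv_mul_le_iff₀ (by positivity), ← nsmul_eq_mul, ← card_univ]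
    exact sum_le_card_nsmul _ _ _ fun j _ => hlast j
  have htelescope : ∑ k ∈ range t, (a k - a (k + 1)) * b k + a t * b t ≤ D ^ 2 * b t := by
    refine sum_range_sub_mul_add_le (fun k hk => ?_) (by positivity [hη 0]) ?_
    · exact pow_le_pow_left₀ (norm_nonneg _) (hdiam _ (hx k hk) _ hu) 2
    · exact fun k l hkl => inv_anti₀ (by positivity [hη l]) (by linarith [hη_anti hkl])
  calc ∑ k, (f (i k) (x k) - f (i k) u) + (Fintype.card ι : ℝ)⁻¹ * ∑ j, (f j (x t) - f j u)
      ≤ ∑ k ∈ range t, ((a k - a (k + 1)) * b k + η k * L ^ 2 / 2)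
          + (a t * b t + η t * L ^ 2 / 2) := by
        rw [← Fin.sum_univ_eq_sum_range (fun k => (a k - a (k + 1)) * b k + η k * L ^ 2 / 2)]
        exact add_le_add (sum_le_sum fun k _ => hstep k) hmean
    _ = (∑ k ∈ range t, (a k - a (k + 1)) * b k + a t * b t)
          + L ^ 2 / 2 * ∑ k ∈ range (t + 1), η k := by
        rw [sum_add_distrib, sum_range_succ η, ← sum_div, ← sum_mul]
        ring
    _ ≤ D ^ 2 / (2 * η t) + L ^ 2 / 2 * ∑ k ∈ range (t + 1), η k := by
        linarith [div_eq_mul_inv (D ^ 2) (2 * η t)]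

theorem projectedSGD_expected_average_gap_le {F : E → ℝ}
    (hF : F = fun y => (Fintype.card ι : ℝ)⁻¹ * ∑ i, f i y) (hu : u ∈ W)
    (hconv : ∀ i, ConvexOn ℝ Set.univ (f i)) (hgrad : ∀ i y, HasGradientAt (f i) (g i y) y)
    (hL : ∀ i, ∀ y ∈ W, ‖g i y‖ ≤ L) (hdiam : ∀ y ∈ W, ∀ z ∈ W, ‖y - z‖ ≤ D)
    (hη : ∀ k, 0 < η k) (hη_anti : Antitone η) (w : (Fin t → ι) → ℕ → E)
    (hw : ∀ σ, ∀ k ≤ t, w σ k ∈ W)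
    (hproj : ∀ σ (k : Fin t),
      ⟪w σ k - η k • g (σ k) (w σ k) - w σ (k + 1), u - w σ (k + 1)⟫ ≤ 0)
    (hfresh : ∀ σ (k : Fin t) c, w (Function.update σ k c) k = w σ k) :
    ((Fintype.card ι : ℝ) ^ t)⁻¹ *
        (∑ σ : Fin t → ι, ((t : ℝ) + 1)⁻¹ * ∑ k ∈ range (t + 1), F (w σ k)) - F u ≤
      (D ^ 2 / (2 * η t) + L ^ 2 / 2 * ∑ k ∈ range (t + 1), η k) / (t + 1) := by
  set R := D ^ 2 / (2 * η t) + L ^ 2 / 2 * ∑ k ∈ range (t + 1), η k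
  set N : ℝ := (Fintype.card ι : ℝ) ^ t
  have hgap : ∀ y, F y - F u = (Fintype.card ι : ℝ)⁻¹ * ∑ i, (f i y - f i u) := by
    simp [hF, mul_sub, sum_sub_distrib]
  have hunbiased : ∀ k : Fin t,
      ∑ σ : Fin t → ι, (F (w σ k) - F u) = ∑ σ : Fin t → ι, (f (σ k) (w σ k) - f (σ k) u) := by
    intro k
    simp only [hgap]
    exact sum_inv_card_mul_sum_eq_sum_apply k (fun i y => f i y - f i u) (w · k) (hfresh · k)
  have hsum : ∑ σ : Fin t → ι, ∑ k ∈ range (t + 1), (F (w σ k) - F u) ≤ N * R := by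
    calc ∑ σ : Fin t → ι, ∑ k ∈ range (t + 1), (F (w σ k) - F u)
        = ∑ σ : Fin t → ι, (∑ k : Fin t, (f (σ k) (w σ k) - f (σ k) u) + (F (w σ t) - F u)) := by
          simp only [sum_range_succ, sum_add_distrib, ← Fin.sum_univ_eq_sum_range]
          rw [sum_comm, sum_congr rfl fun k _ => hunbiased k, sum_comm]
      _ ≤ ∑ _σ : Fin t → ι, R := sum_le_sum fun σ _ => by
          rw [hgap]
          exact projectedSGD_regret_le σ (w σ) hu hconv hgrad hL hdiam hη hη_anti (hw σ) (hproj σ)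
      _ = N * R := by simp [N]
  have hexpand : ∑ σ : Fin t → ι, ∑ k ∈ range (t + 1), (F (w σ k) - F u)
      = ∑ σ : Fin t → ι, ∑ k ∈ range (t + 1), F (w σ k) - N * (t + 1) * F u := by
    simp only [sum_sub_distrib, sum_const, card_range, card_univ, Fintype.card_pi, prod_const,
      Fintype.card_fin, nsmul_eq_mul, Nat.cast_add, Nat.cast_one, Nat.cast_pow, sub_right_inj, N]
    ring
  have hN : 0 < N := by positivity
  calc N⁻¹ * (∑ σ : Fin t → ι, ((t : ℝ) + 1)⁻¹ * ∑ k ∈ range (t + 1), F (w σ k)) - F u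
      = (∑ σ : Fin t → ι, ∑ k ∈ range (t + 1), (F (w σ k) - F u)) / (N * (t + 1)) := by
        rw [hexpand, ← mul_sum]
        field_simp
    _ ≤ N * R / (N * (t + 1)) := by gcongr
    _ = R / (t + 1) := by field_simp

end ProjectedSGD

noncomputable def sqrtStepSize (D L₁ : ℝ) (k : ℕ) : ℝ := D / (L₁ * √(k + 1))

theorem sqrtStepSize_pos {D L₁ : ℝ} (hD : 0 < D) (hL₁ : 0 < L₁) (k : ℕ) :
    0 < sqrtStepSize D L₁ k := by
  unfold sqrtStepSize
  have : 0 < √((k : ℝ) + 1) := Real.sqrt_pos.2 (by positivity)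
  positivity

theorem sqrtStepSize_antitone {D L₁ : ℝ} (hD : 0 < D) (hL₁ : 0 < L₁) :
    Antitone (sqrtStepSize D L₁) := fun k l hkl => by
  unfold sqrtStepSize
  have : 0 < √((k : ℝ) + 1) := Real.sqrt_pos.2 (by positivity)
  gcongr

theorem regret_bound_sqrtStepSize_le {D L₁ : ℝ} (L : ℝ) (hD : 0 < D) (hL₁ : 0 < L₁) (t : ℕ) :
    (D ^ 2 / (2 * sqrtStepSize D L₁ t) + L ^ 2 / 2 * ∑ k ∈ range (t + 1), sqrtStepSize D L₁ k) /
        (t + 1) ≤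
      D * (L₁ ^ 2 + 2 * L ^ 2) / (2 * L₁ * √(t + 1)) := by
  have hsum : ∑ k ∈ range (t + 1), sqrtStepSize D L₁ k ≤ D / L₁ * (2 * √(t + 1)) := by
    calc ∑ k ∈ range (t + 1), sqrtStepSize D L₁ k
        = D / L₁ * ∑ k ∈ range (t + 1), (√((k : ℝ) + 1))⁻¹ := by
          rw [mul_sum]
          exact sum_congr rfl fun k _ => by rw [sqrtStepSize, div_mul_eq_div_div, div_eq_mul_inv]
      _ ≤ D / L₁ * (2 * √(t + 1)) := by
          gcongr
          exact_mod_cast sum_range_inv_sqrt_succ_le (t + 1)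
  have hpos : 0 < √((t : ℝ) + 1) := Real.sqrt_pos.2 (by positivity)
  have hsq : √((t : ℝ) + 1) ^ 2 = t + 1 := Real.sq_sqrt (by positivity)
  calc (D ^ 2 / (2 * sqrtStepSize D L₁ t) + L ^ 2 / 2 * ∑ k ∈ range (t + 1), sqrtStepSize D L₁ k) /
        (t + 1)
      ≤ (D ^ 2 / (2 * sqrtStepSize D L₁ t) + L ^ 2 / 2 * (D / L₁ * (2 * √(t + 1)))) / (t + 1) := by
        gcongr
    _ = D * (L₁ ^ 2 + 2 * L ^ 2) / (2 * L₁ * √(t + 1)) := by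
        unfold sqrtStepSize
        field_simp
        linear_combination hsq

theorem sgd_running_average_rate_general
    {d : ℕ} {n : ℕ} (hn : 1 ≤ n)
    (W : Set (EuclideanSpace ℝ (Fin d)))
    (D : ℝ) (hD : 0 < D) (hdiam : ∀ w ∈ W, ∀ v ∈ W, ‖w - v‖ ≤ D)
    (f : Fin n → EuclideanSpace ℝ (Fin d) → ℝ)
    (g : Fin n → EuclideanSpace ℝ (Fin d) → EuclideanSpace ℝ (Fin d))
    (hconv : ∀ i, ConvexOn ℝ Set.univ (f i))
    (hgrad : ∀ i x, HasGradientAt (f i) (g i x) x)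
    (L₀ : ℝ) (hL₀ : ∀ i, ∀ x ∈ W, ‖g i x‖ ≤ L₀)
    (F : EuclideanSpace ℝ (Fin d) → ℝ)
    (hF : F = fun w => (n : ℝ)⁻¹ * ∑ i : Fin n, f i w)
    (wstar : EuclideanSpace ℝ (Fin d)) (hws : wstar ∈ W)
    (L₁ : ℝ) (hL₁ : 0 < L₁) (t : ℕ)
    (w₀ : EuclideanSpace ℝ (Fin d)) (hw₀ : w₀ ∈ W)
    (η : ℕ → ℝ) (hη : ∀ k : ℕ, η k = D / (L₁ * Real.sqrt (k + 1)))
    (w : (Fin t → Fin n) → ℕ → EuclideanSpace ℝ (Fin d))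
    (hw0 : ∀ σ, w σ 0 = w₀)
    (hmem : ∀ σ k, k < t → w σ (k + 1) ∈ W)
    (hproj : ∀ (σ : Fin t → Fin n) (k : ℕ) (hk : k < t), ∀ u ∈ W,
      ⟪w σ k - η k • g (σ ⟨k, hk⟩) (w σ k) - w σ (k + 1), u - w σ (k + 1)⟫ ≤ 0)
    (hdep : ∀ (σ σ' : Fin t → Fin n) (k : ℕ), k < t →
      (∀ j : Fin t, (j : ℕ) ≤ k → σ j = σ' j) → w σ (k + 1) = w σ' (k + 1)) :
    ((n : ℝ) ^ t)⁻¹ *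
        (∑ σ : Fin t → Fin n, ((t : ℝ) + 1)⁻¹ * ∑ k ∈ Finset.range (t + 1), F (w σ k)) -
        F wstar ≤
      D * (L₁ ^ 2 + 2 * L₀ ^ 2) / (2 * L₁ * Real.sqrt (t + 1)) := by
  have : Nonempty (Fin n) := ⟨⟨0, hn⟩⟩
  obtain rfl : η = sqrtStepSize D L₁ := funext hη
  have hw : ∀ σ, ∀ k ≤ t, w σ k ∈ W := fun σ k hk => by
    cases k with
    | zero => rwa [hw0]
    | succ k => exact hmem σ k hk
  have hfresh : ∀ σ (k : Fin t) c, w (Function.update σ k c) k = w σ k := by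
    rintro σ ⟨_ | k, hk⟩ c
    · rw [hw0, hw0]
    · refine hdep _ _ k (by omega) fun j hj => Function.update_of_ne ?_ _ _
      rintro rfl
      exact absurd hj (by simp)
  have hgap := projectedSGD_expected_average_gap_le (F := F) (by rwa [Fintype.card_fin]) hws
    hconv hgrad hL₀ hdiam (sqrtStepSize_pos hD hL₁) (sqrtStepSize_antitone hD hL₁) w hw
    (fun σ k => hproj σ k k.2 wstar hws) hfresh
  rw [Fintype.card_fin] at hgap
  exact hgap.trans (regret_bound_sqrtStepSize_le L₀ hD hL₁ t)

/-- `O(1/√t)` convergence rate of the running average of projected SGD iterates (in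
expectation over the uniformly random index sequences) for an average `F` of convex
functions with gradients bounded by `L₀` on a convex set of diameter at most `D`,
with step sizes `η_k = D / (L₁ √(k+1))`. -/
theorem sgd_running_average_rate
    {d : ℕ} {n : ℕ} (hn : 1 ≤ n)
    (W : Set (EuclideanSpace ℝ (Fin d))) (hW : Convex ℝ W) (hWne : W.Nonempty)
    (D : ℝ) (hD : 0 < D) (hdiam : ∀ w ∈ W, ∀ v ∈ W, ‖w - v‖ ≤ D)
    (f : Fin n → EuclideanSpace ℝ (Fin d) → ℝ)
    (g : Fin n → EuclideanSpace ℝ (Fin d) → EuclideanSpace ℝ (Fin d))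
    (hconv : ∀ i, ConvexOn ℝ Set.univ (f i))
    (hgrad : ∀ i x, HasGradientAt (f i) (g i x) x)
    (L₀ : ℝ) (hL₀ : ∀ i, ∀ x ∈ W, ‖g i x‖ ≤ L₀)
    (F : EuclideanSpace ℝ (Fin d) → ℝ)
    (hF : F = fun w => (n : ℝ)⁻¹ * ∑ i : Fin n, f i w)
    (wstar : EuclideanSpace ℝ (Fin d)) (hws : wstar ∈ W)
    (hmin : ∀ w ∈ W, F wstar ≤ F w)
    (L₁ : ℝ) (hL₁ : 0 < L₁) (t : ℕ)
    (w₀ : EuclideanSpace ℝ (Fin d)) (hw₀ : w₀ ∈ W)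
    (η : ℕ → ℝ) (hη : ∀ k : ℕ, η k = D / (L₁ * Real.sqrt (k + 1)))
    (w : (Fin t → Fin n) → ℕ → EuclideanSpace ℝ (Fin d))
    (hw0 : ∀ σ, w σ 0 = w₀)
    (hmem : ∀ σ k, k < t → w σ (k + 1) ∈ W)
    (hproj : ∀ (σ : Fin t → Fin n) (k : ℕ) (hk : k < t), ∀ u ∈ W,
      ⟪w σ k - η k • g (σ ⟨k, hk⟩) (w σ k) - w σ (k + 1), u - w σ (k + 1)⟫ ≤ 0)
    (hdep : ∀ (σ σ' : Fin t → Fin n) (k : ℕ), k < t →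
      (∀ j : Fin t, (j : ℕ) ≤ k → σ j = σ' j) → w σ (k + 1) = w σ' (k + 1)) :
    ((n : ℝ) ^ t)⁻¹ *
        (∑ σ : Fin t → Fin n, ((t : ℝ) + 1)⁻¹ * ∑ k ∈ Finset.range (t + 1), F (w σ k)) -
        F wstar ≤
      D * (L₁ ^ 2 + 2 * L₀ ^ 2) / (2 * L₁ * Real.sqrt (t + 1)) :=
  sgd_running_average_rate_general hn W D hD hdiam f g hconv hgrad L₀ hL₀ F hF wstar hws L₁ hL₁ t w₀
    hw₀ η hη w hw0 hmem hproj hdep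
end

section
/- Let f : ℝ^d → ℝ be continuous and differentiable, let w₀ ∈ ℝ^d, and let λ, r > 0. Assume that for every w with ‖w − w₀‖ ≤ r, f(w) ≥ f(w₀) + ⟨∇f(w₀), w − w₀⟩ + (λ/4)‖w − w₀‖², and that ‖∇f(w₀)‖ < λr/4. Then there exists a point w* with ‖w* − w₀‖ < r such that w* is a local minimum of f (that is, f(w*) ≤ f(w) for all w in some open neighborhood of w*); in fact any minimizer of f over the closed ball {w : ‖w − w₀‖ ≤ r} lies in the open ball and is a local minimum of f. -/
open scoped RealInnerProductSpace

/-- Under a local strong-convexity lower bound on a ball of radius `r` around `w₀` and a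
small gradient at `w₀`, there is a local minimum of `f` in the open ball around `w₀`;
in fact any minimizer of `f` over the closed ball lies in the open ball and is a local
minimum of `f`. -/
theorem exists_local_min_in_ball
    {d : ℕ} (f : EuclideanSpace ℝ (Fin d) → ℝ)
    (hcont : Continuous f) (hdiff : Differentiable ℝ f)
    (w₀ : EuclideanSpace ℝ (Fin d)) (lam r : ℝ) (hlam : 0 < lam) (hr : 0 < r)
    (hsc : ∀ w : EuclideanSpace ℝ (Fin d), ‖w - w₀‖ ≤ r →
      f w₀ + ⟪gradient f w₀, w - w₀⟫ + lam / 4 * ‖w - w₀‖ ^ 2 ≤ f w)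
    (hgrad : ‖gradient f w₀‖ < lam * r / 4) :
    (∃ wstar : EuclideanSpace ℝ (Fin d), ‖wstar - w₀‖ < r ∧ IsLocalMin f wstar) ∧
      ∀ wstar : EuclideanSpace ℝ (Fin d), ‖wstar - w₀‖ ≤ r →
        (∀ w : EuclideanSpace ℝ (Fin d), ‖w - w₀‖ ≤ r → f wstar ≤ f w) →
        ‖wstar - w₀‖ < r ∧ IsLocalMin f wstar := by
  have key : ∀ wstar : EuclideanSpace ℝ (Fin d), ‖wstar - w₀‖ ≤ r →
      (∀ w : EuclideanSpace ℝ (Fin d), ‖w - w₀‖ ≤ r → f wstar ≤ f w) →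
      ‖wstar - w₀‖ < r ∧ IsLocalMin f wstar := by
    intro ws hle hmin
    have hlt : ‖ws - w₀‖ < r := by
      rcases eq_or_lt_of_le hle with h | h
      · -- derive contradiction / show it anyway
        exfalso
        have h1 := hsc ws hle
        have h2 : f ws ≤ f w₀ := hmin w₀ (by simp [hr.le])
        have h3 : ⟪gradient f w₀, ws - w₀⟫ + lam / 4 * ‖ws - w₀‖ ^ 2 ≤ 0 := by
          linarith
        have h4 : -(‖gradient f w₀‖ * ‖ws - w₀‖) ≤ ⟪gradient f w₀, ws - w₀⟫ :=
          neg_abs_le _ |>.trans' (by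
            have := abs_real_inner_le_norm (gradient f w₀) (ws - w₀)
            linarith [neg_le_neg this])
        have hnr : ‖ws - w₀‖ = r := h
        have hgn : ‖gradient f w₀‖ * r < lam * r / 4 * r :=
          mul_lt_mul_of_pos_right hgrad hr
        rw [hnr] at h3 h4
        nlinarith
      · exact h
    refine ⟨hlt, ?_⟩
    have hnhds : Metric.ball w₀ r ∈ nhds ws := by
      exact Metric.isOpen_ball.mem_nhds (by simpa [Metric.mem_ball, dist_eq_norm] using hlt)
    refine Filter.eventually_of_mem hnhds ?_
    intro w hw
    exact hmin w (by simpa [Metric.mem_ball, dist_eq_norm] using hw.le)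
  refine ⟨?_, key⟩
  obtain ⟨ws, hws, hmin⟩ := (isCompact_closedBall w₀ r).exists_isMinOn
    ⟨w₀, by simp [hr.le]⟩ hcont.continuousOn
  have hws' : ‖ws - w₀‖ ≤ r := by simpa [Metric.mem_closedBall, dist_eq_norm] using hws
  have hmin' : ∀ w : EuclideanSpace ℝ (Fin d), ‖w - w₀‖ ≤ r → f ws ≤ f w := fun w hw =>
    hmin (by simpa [Metric.mem_closedBall, dist_eq_norm] using hw)
  obtain ⟨h1, h2⟩ := key ws hws' hmin'
  exact ⟨ws, h1, h2⟩
end
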